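/- Let ω be a fixed discrete random variable and define f on finite sets A of discrete random variables by f(A) = I(A ; ω), the mutual information between the joint of the variables in A and ω, where all members of the ground set are mutually conditionally independent given ω. Then f is submodular: for any set A and any two distinct variables y₁, y₂ not in A, f(A ∪ {y₁}) + f(A ∪ {y₂}) ≥ f(A ∪ {y₁, y₂}) + f(A). -/

import Mathlib

/-!
Conditional independence given `ω` makes the conditional entropy additive,
`H(Y_A | ω) = ∑_{i ∈ A} H(y_i | ω)`, so `f(A) = H(Y_A) - ∑_{i ∈ A} H(y_i | ω)` is the joint
entropy minus a modular function. Submodularity of `f` therefore reduces to that of joint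
entropy, `H(X, Y, Z) + H(Z) ≤ H(X, Z) + H(Y, Z)`, which is Gibbs' inequality (`log x ≤ x - 1`)
applied for each value of `Z`.
-/

open scoped BigOperators Classical

/-- Probability that the discrete random variable `X` takes value `a`,
under weight function `p` on a finite sample space. -/
noncomputable def pr {Ω α : Type*} [Fintype Ω] (p : Ω → ℝ) (X : Ω → α) (a : α) : ℝ :=
  ∑ s : Ω, if X s = a then p s else 0

/-- Shannon entropy of a discrete random variable. -/
noncomputable def ent {Ω α : Type*} [Fintype Ω] [Fintype α] (p : Ω → ℝ) (X : Ω → α) : ℝ :=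
  ∑ a : α, Real.negMulLog (pr p X a)

/-- Conditional Shannon entropy `H(X | Y) = ∑_b P(Y=b) H(X | Y=b)`. -/
noncomputable def condEnt {Ω α β : Type*} [Fintype Ω] [Fintype α] [Fintype β]
    (p : Ω → ℝ) (X : Ω → α) (Y : Ω → β) : ℝ :=
  ∑ b : β, ∑ a : α,
    pr p Y b * Real.negMulLog (pr p (fun s => (X s, Y s)) (a, b) / pr p Y b)

/-- Mutual information `I(X ; Y) = H(X) − H(X | Y)`. -/
noncomputable def mi {Ω α β : Type*} [Fintype Ω] [Fintype α] [Fintype β]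
    (p : Ω → ℝ) (X : Ω → α) (Y : Ω → β) : ℝ :=
  ent p X - condEnt p X Y

/-- Conditional mutual information `I(X ; Y | Z) = H(X | Z) − H(X | Z, Y)`. -/
noncomputable def cmi {Ω α β γ : Type*} [Fintype Ω] [Fintype α] [Fintype β] [Fintype γ]
    (p : Ω → ℝ) (X : Ω → α) (Y : Ω → β) (Z : Ω → γ) : ℝ :=
  condEnt p X Z - condEnt p X (fun s => (Z s, Y s))

/-- The joint random variable of a family of random variables. -/
def jointFam {Ω ι α : Type*} (y : ι → Ω → α) : Ω → (ι → α) := fun s i => y i s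

/-- The joint random variable of the sub-family indexed by a finite set `A`. -/
def jointSet {Ω ι α : Type*} (y : ι → Ω → α) (A : Finset ι) : Ω → (A → α) :=
  fun s i => y i.1 s

/-- The family `y` is mutually conditionally independent given `w`:
the conditional joint distribution factorizes. -/
def CondIndepFam {Ω ι α γ : Type*} [Fintype Ω] [Fintype ι] (p : Ω → ℝ)
    (y : ι → Ω → α) (w : Ω → γ) : Prop :=
  ∀ c : γ, 0 < pr p w c → ∀ a : ι → α,
    pr p (fun s => (jointFam y s, w s)) (a, c) / pr p w c
      = ∏ i : ι, pr p (fun s => (y i s, w s)) (a i, c) / pr p w c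

open Real Finset

lemma mul_log_sub_mul_log_le {q r : ℝ} (hq : 0 < q) (hr : 0 < r) :
    q * log r - q * log q ≤ r - q := by
  have h := log_le_sub_one_of_pos (div_pos hr hq)
  rw [log_div hr.ne' hq.ne'] at h
  have := mul_le_mul_of_nonneg_left h hq.le
  rwa [mul_sub, mul_sub, mul_div_cancel₀ _ hq.ne', mul_one] at this

/-- Subadditivity `H(A, B) ≤ H(A) + H(B)` of entropy, for an unnormalised joint weight `q`. -/
lemma negMulLog_sum_add_sum_negMulLog_le {α β : Type*} [Fintype α] [Fintype β]
    (q : α → β → ℝ) (hq : ∀ a b, 0 ≤ q a b) :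
    negMulLog (∑ a, ∑ b, q a b) + ∑ a, ∑ b, negMulLog (q a b)
      ≤ ∑ a, negMulLog (∑ b, q a b) + ∑ b, negMulLog (∑ a, q a b) := by
  set m := ∑ a, ∑ b, q a b
  set mA := fun a => ∑ b, q a b
  set mB := fun b => ∑ a, q a b
  have hmB : ∑ b, mB b = m := sum_comm
  have hA0 : ∀ a, 0 ≤ mA a := fun a => sum_nonneg fun b _ => hq a b
  have hB0 : ∀ b, 0 ≤ mB b := fun b => sum_nonneg fun a _ => hq a b
  have pointwise : ∀ a b, q a b * log (mA a) + q a b * log (mB b) - q a b * log (q a b)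
      - q a b * log m ≤ mA a * mB b / m - q a b := by
    intro a b
    rcases (hq a b).eq_or_lt with h | h
    · rw [← h]
      simp only [zero_mul, sub_zero, add_zero]
      exact div_nonneg (mul_nonneg (hA0 a) (hB0 b)) (sum_nonneg fun a _ => hA0 a)
    -- compare `q` with the product weight `mA * mB / m`, which has the same total mass
    · have hA : 0 < mA a := h.trans_le (single_le_sum (fun b _ => hq a b) (mem_univ b))
      have hB : 0 < mB b := h.trans_le (single_le_sum (fun a _ => hq a b) (mem_univ a))
      have hm : 0 < m := hA.trans_le (single_le_sum (fun a _ => hA0 a) (mem_univ a))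
      have := mul_log_sub_mul_log_le h (div_pos (mul_pos hA hB) hm)
      rw [log_div (mul_pos hA hB).ne' hm.ne', log_mul hA.ne' hB.ne'] at this
      linarith
  have total : ∑ a, ∑ b, (mA a * mB b / m - q a b) = 0 := by
    simp only [sum_sub_distrib, ← sum_div, ← sum_mul_sum, hmB]
    exact sub_eq_zero.mpr (mul_self_div_self m)
  have expand : ∑ a, negMulLog (mA a) + ∑ b, negMulLog (mB b) - negMulLog m
      - ∑ a, ∑ b, negMulLog (q a b) = -∑ a, ∑ b, (q a b * log (mA a) + q a b * log (mB b)
        - q a b * log (q a b) - q a b * log m) := by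
    simp only [negMulLog, mA, mB, m, sum_mul, neg_mul, sum_neg_distrib, sum_sub_distrib,
      sum_add_distrib]
    rw [sum_comm (f := fun b a => q a b * log (∑ a, q a b))]
    ring
  linarith [sum_le_sum fun a (_ : a ∈ univ) =>
    sum_le_sum fun b (_ : b ∈ univ) => pointwise a b]

lemma negMulLog_prod {κ : Type*} (s : Finset κ) (x : κ → ℝ) :
    negMulLog (∏ i ∈ s, x i) = ∑ i ∈ s, (∏ j ∈ s, x j) * -log (x i) := by
  by_cases h : ∀ i ∈ s, x i ≠ 0
  · rw [negMulLog, log_prod h]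
    simp only [neg_mul, mul_sum, mul_neg, sum_neg_distrib]
  · push Not at h
    obtain ⟨i, hi, hx⟩ := h
    simp [prod_eq_zero hi hx]

section ProductMeasure
variable {κ α R : Type*} [Fintype κ] [DecidableEq κ] [Fintype α] [CommSemiring R]

lemma sum_prod_mul_apply_eq {q : κ → α → R} (hq : ∀ j, ∑ a, q j a = 1) (i : κ)
    (φ : α → R) :
    ∑ f : κ → α, (∏ j, q j (f j)) * φ (f i) = ∑ a, q i a * φ a := by
  have hfactor : ∀ j, ∑ a, q j a * (if j = i then φ a else 1)
      = if j = i then ∑ a, q i a * φ a else 1 := by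
    intro j
    split_ifs with hj
    · rw [hj]
    · simp only [mul_one, hq j]
  calc ∑ f : κ → α, (∏ j, q j (f j)) * φ (f i)
      = ∑ f : κ → α, ∏ j, q j (f j) * (if j = i then φ (f j) else 1) := by
        simp only [prod_mul_distrib, Fintype.prod_ite_eq']
    _ = ∑ a, q i a * φ a := by
        rw [← Fintype.prod_sum fun j a => q j a * if j = i then φ a else 1]
        simp only [hfactor, Fintype.prod_ite_eq']

lemma sum_prod_ite_restrict_eq (S : Finset κ) {q : κ → α → R} (hq : ∀ j, ∑ a, q j a = 1)
    (f : S → α) :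
    ∑ g : κ → α, (if ∀ i : S, g i = f i then ∏ i, q i (g i) else 0) = ∏ i : S, q i (f i) := by
  set r : κ → α → R := fun i a => if ∀ h : i ∈ S, a = f ⟨i, h⟩ then q i a else 0
  have hr : ∀ g : κ → α,
      (if ∀ i : S, g i = f i then ∏ i, q i (g i) else 0) = ∏ i, r i (g i) := by
    intro g
    simp only [r, Fintype.prod_ite_zero, Subtype.forall]
  have hr_sum : ∀ i, ∑ a, r i a = if h : i ∈ S then q i (f ⟨i, h⟩) else 1 := by
    intro i
    split_ifs with h
    · simp [r, h]
    · simp [r, h, hq i]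
  rw [sum_congr rfl fun g _ => hr g, ← Fintype.prod_sum r]
  simp only [hr_sum]
  rw [← prod_subset (subset_univ S) fun i _ hi => dif_neg hi, ← prod_coe_sort]
  exact prod_congr rfl fun i _ => dif_pos i.2

lemma sum_negMulLog_prod {q : κ → α → ℝ} (hq : ∀ j, ∑ a, q j a = 1) :
    ∑ f : κ → α, negMulLog (∏ i, q i (f i)) = ∑ i, ∑ a, negMulLog (q i a) := by
  simp only [negMulLog_prod]
  rw [sum_comm]
  refine sum_congr rfl fun i _ => ?_
  rw [sum_prod_mul_apply_eq hq i fun a => -log (q i a)]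
  simp only [negMulLog, neg_mul, mul_neg]

end ProductMeasure

section Probability
variable {Ω α β γ : Type*} [Fintype Ω] {p : Ω → ℝ}

lemma pr_nonneg (hp : ∀ s, 0 ≤ p s) (X : Ω → α) (a : α) : 0 ≤ pr p X a :=
  sum_nonneg fun s _ => by split <;> [exact hp s; exact le_rfl]

lemma sum_pr_fst [Fintype α] (X : Ω → α) (W : Ω → β) (b : β) :
    ∑ a, pr p (fun s => (X s, W s)) (a, b) = pr p W b := by
  unfold pr
  rw [sum_comm]
  refine sum_congr rfl fun s _ => ?_
  by_cases h : W s = b <;> simp [Prod.ext_iff, h]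

lemma sum_pr_mid [Fintype β] (X : Ω → α) (Y : Ω → β) (Z : Ω → γ) (a : α) (c : γ) :
    ∑ b, pr p (fun s => (X s, (Y s, Z s))) (a, (b, c))
      = pr p (fun s => (X s, Z s)) (a, c) := by
  unfold pr
  rw [sum_comm]
  refine sum_congr rfl fun s _ => ?_
  by_cases h1 : X s = a <;> by_cases h2 : Z s = c <;> simp [Prod.ext_iff, h1, h2]

lemma sum_pr_fst_div [Fintype α] (X : Ω → α) (W : Ω → β) {b : β} (hb : pr p W b ≠ 0) :
    ∑ a, pr p (fun s => (X s, W s)) (a, b) / pr p W b = 1 := by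
  rw [← sum_div, sum_pr_fst, div_self hb]

lemma pr_comp_fst [Fintype α] (X : Ω → α) (W : Ω → γ) (φ : α → β) (b : β) (c : γ) :
    pr p (fun s => (φ (X s), W s)) (b, c)
      = ∑ a, if φ a = b then pr p (fun s => (X s, W s)) (a, c) else 0 := by
  simp only [pr, ite_sum_zero]
  rw [sum_comm]
  refine sum_congr rfl fun s _ => ?_
  rw [sum_eq_single (X s)]
  · by_cases h : W s = c <;> simp [h]
  · intro a _ ha
    simp [Prod.ext_iff, Ne.symm ha]
  · simp

lemma pr_comp_of_injective (X : Ω → α) {g : α → β} (hg : Function.Injective g) (a : α) :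
    pr p (fun s => g (X s)) (g a) = pr p X a := by
  simp only [pr, hg.eq_iff]

lemma pr_comp_of_notMem_range (X : Ω → α) {g : α → β} {b : β} (hb : b ∉ Set.range g) :
    pr p (fun s => g (X s)) b = 0 :=
  sum_eq_zero fun s _ => if_neg fun h => hb ⟨X s, h⟩

lemma ent_comp_of_injective [Fintype α] [Fintype β] (X : Ω → α) {g : α → β}
    (hg : Function.Injective g) : ent p (fun s => g (X s)) = ent p X :=
  (Fintype.sum_of_injective g hg _ _
    (fun b hb => by rw [pr_comp_of_notMem_range X hb, negMulLog_zero])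
    (fun a => by rw [pr_comp_of_injective X hg])).symm

lemma ent_submodular [Fintype α] [Fintype β] [Fintype γ]
    (hp : ∀ s, 0 ≤ p s) (X : Ω → α) (Y : Ω → β) (Z : Ω → γ) :
    ent p (fun s => (X s, (Y s, Z s))) + ent p Z
      ≤ ent p (fun s => (X s, Z s)) + ent p (fun s => (Y s, Z s)) := by
  have key := sum_le_sum fun c (_ : c ∈ univ) => negMulLog_sum_add_sum_negMulLog_le
    (fun a b => pr p (fun s => (X s, (Y s, Z s))) (a, (b, c))) fun a b => pr_nonneg hp _ _
  simp only [sum_add_distrib, sum_pr_mid, sum_pr_fst] at key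
  simp only [ent, Fintype.sum_prod_type]
  rw [add_comm]
  -- `key` is the claim up to the order of summation
  convert key using 2 <;> first
    | rfl | exact sum_comm | exact (sum_congr rfl fun _ _ => sum_comm).trans sum_comm

end Probability

section JointSet
variable {Ω ι α : Type*} [DecidableEq ι]

def splitInsert (i : ι) (S : Finset ι) (f : ↥(insert i S) → α) : α × (S → α) :=
  (f ⟨i, mem_insert_self i S⟩, fun j => f ⟨j, mem_insert_of_mem j.2⟩)

lemma splitInsert_injective (i : ι) (S : Finset ι) :
    Function.Injective (splitInsert (α := α) i S) := by
  intro f g hfg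
  funext ⟨j, hj⟩
  rcases mem_insert.mp hj with rfl | hj
  · exact congrArg Prod.fst hfg
  · exact congrFun (congrArg Prod.snd hfg) ⟨j, hj⟩

variable [Fintype Ω] [Fintype α] {p : Ω → ℝ}

lemma ent_jointSet_insert (y : ι → Ω → α) (i : ι) (S : Finset ι) :
    ent p (jointSet y (insert i S)) = ent p (fun s => (y i s, jointSet y S s)) :=
  (ent_comp_of_injective (jointSet y (insert i S)) (splitInsert_injective i S)).symm

lemma ent_jointSet_submodular (hp : ∀ s, 0 ≤ p s) (y : ι → Ω → α) (i₁ i₂ : ι) (S : Finset ι) :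
    ent p (jointSet y (insert i₁ (insert i₂ S))) + ent p (jointSet y S)
      ≤ ent p (jointSet y (insert i₁ S)) + ent p (jointSet y (insert i₂ S)) := by
  have h₁₂ : ent p (jointSet y (insert i₁ (insert i₂ S)))
      = ent p (fun s => (y i₁ s, (y i₂ s, jointSet y S s))) := by
    rw [ent_jointSet_insert]
    exact (ent_comp_of_injective (fun s => (y i₁ s, jointSet y (insert i₂ S) s))
      (Function.injective_id.prodMap (splitInsert_injective i₂ S))).symm
  rw [h₁₂, ent_jointSet_insert, ent_jointSet_insert]
  exact ent_submodular hp _ _ _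

end JointSet

section CondIndep
variable {Ω ι α γ : Type*} [Fintype Ω] [Fintype ι] [DecidableEq ι] [Fintype α]
  {p : Ω → ℝ} {y : ι → Ω → α} {w : Ω → γ}

lemma CondIndepFam.pr_jointSet_div (hind : CondIndepFam p y w) (S : Finset ι) {c : γ}
    (hc : 0 < pr p w c) (f : S → α) :
    pr p (fun s => (jointSet y S s, w s)) (f, c) / pr p w c
      = ∏ i : S, pr p (fun s => (y i s, w s)) (f i, c) / pr p w c := by
  -- marginalise the factorised law of the whole family over the coordinates outside `S`
  rw [← sum_prod_ite_restrict_eq S (fun i => sum_pr_fst_div (y i) w hc.ne') f,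
    show pr p (fun s => (jointSet y S s, w s)) (f, c) = _ from
      pr_comp_fst (jointFam y) w (fun (g : ι → α) (i : S) => g i) f c, sum_div]
  refine sum_congr rfl fun g _ => ?_
  rw [← hind c hc g, ite_div, zero_div]
  simp only [funext_iff]

lemma CondIndepFam.condEnt_jointSet [Fintype γ] (hp : ∀ s, 0 ≤ p s) (hind : CondIndepFam p y w)
    (S : Finset ι) : condEnt p (jointSet y S) w = ∑ i ∈ S, condEnt p (y i) w := by
  unfold condEnt
  rw [sum_comm (s := S)]
  refine sum_congr rfl fun c _ => ?_
  rcases (pr_nonneg hp w c).eq_or_lt with hc | hc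
  · simp [← hc]
  simp only [hind.pr_jointSet_div S hc, ← mul_sum]
  rw [sum_negMulLog_prod fun i : S => sum_pr_fst_div (y i) w hc.ne', ← sum_coe_sort S]

end CondIndep

theorem stmt_4_general {Ω ι α γ : Type*} [Fintype Ω] [Fintype ι] [DecidableEq ι]
    [Fintype α] [Fintype γ]
    (p : Ω → ℝ) (hp : ∀ s, 0 ≤ p s)
    (y : ι → Ω → α) (w : Ω → γ) (hind : CondIndepFam p y w)
    (A : Finset ι) (i₁ i₂ : ι) (hne : i₁ ≠ i₂) (h₁ : i₁ ∉ A) (h₂ : i₂ ∉ A) :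
    mi p (jointSet y (insert i₁ A)) w + mi p (jointSet y (insert i₂ A)) w
      ≥ mi p (jointSet y (insert i₁ (insert i₂ A))) w + mi p (jointSet y A) w := by
  have h₁₂ : i₁ ∉ insert i₂ A := by simp [hne, h₁]
  simp only [mi, hind.condEnt_jointSet hp, sum_insert h₁, sum_insert h₂, sum_insert h₁₂]
  linarith [ent_jointSet_submodular hp y i₁ i₂ A]

/-- the BatchBALD set function `f(A) = I(A ; ω)` is submodular
when the ground set of variables is mutually conditionally independent given `ω`. -/
theorem stmt_4 {Ω ι α γ : Type*} [Fintype Ω] [Fintype ι] [DecidableEq ι]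
    [Fintype α] [Fintype γ]
    (p : Ω → ℝ) (hp : ∀ s, 0 ≤ p s) (hsum : ∑ s, p s = 1)
    (y : ι → Ω → α) (w : Ω → γ) (hind : CondIndepFam p y w)
    (A : Finset ι) (i₁ i₂ : ι) (hne : i₁ ≠ i₂) (h₁ : i₁ ∉ A) (h₂ : i₂ ∉ A) :
    mi p (jointSet y (insert i₁ A)) w + mi p (jointSet y (insert i₂ A)) w
      ≥ mi p (jointSet y (insert i₁ (insert i₂ A))) w + mi p (jointSet y A) w :=
  stmt_4_general p hp y w hind A i₁ i₂ hne h₁ h₂
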